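/- arXiv:2412.00253 — 5 statements merged into one kernel-verified Lean document; each statement's English description precedes it below -/
import Mathlib

section
/- For all natural numbers x ≥ 1 and indices j < k, the integers star^j(x) + 1 and star^k(x) + 1 are coprime, where star(x) = x(x+1). -/
def star (x : ℕ) : ℕ := x * (x + 1)

lemma star_dvd_aux (a : ℕ) (m : ℕ) (hm : 1 ≤ m) : (a + 1) ∣ star^[m] a := by
  induction m with
  | zero => omega
  | succ n ih =>
    rcases Nat.eq_zero_or_pos n with h | h
    · subst h
      show a + 1 ∣ _root_.star a
      rw [show _root_.star a = a * (a+1) from rfl]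
      exact Dvd.dvd.mul_left dvd_rfl a
    · have hd := ih h
      rw [Function.iterate_succ_apply']
      rw [show _root_.star (_root_.star^[n] a) = _root_.star^[n] a * (_root_.star^[n] a + 1) from rfl]
      exact hd.mul_right _

theorem iter_pairwise_coprime (x j k : ℕ) (hx : 1 ≤ x) (hjk : j < k) :
    Nat.Coprime (star^[j] x + 1) (star^[k] x + 1) := by
  have hdvd : (star^[j] x + 1) ∣ star^[k] x := by
    have := star_dvd_aux (star^[j] x) (k - j) (by omega)
    rwa [← Function.iterate_add_apply, Nat.sub_add_cancel hjk.le] at this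
  have h1 := (Nat.gcd_dvd_left (star^[j] x + 1) (star^[k] x + 1)).trans hdvd
  have h2 := Nat.gcd_dvd_right (star^[j] x + 1) (star^[k] x + 1)
  have h3 := Nat.dvd_sub h2 h1
  have he : star^[k] x + 1 - star^[k] x = 1 := by omega
  rw [he] at h3
  exact Nat.eq_one_of_dvd_one h3
end

section
/- For every natural number x ≥ 1 and every k ≥ 1, star^k(x) + 1 = 1 + x · ∏_{j=0}^{k-1} (star^j(x) + 1). -/
open Finset

theorem Function.iterate_eq_mul_prod_range {M : Type*} [CommMonoid M] {f g : M → M}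
    (hfg : ∀ y, f y = y * g y) (x : M) (k : ℕ) :
    f^[k] x = x * ∏ j ∈ range k, g (f^[j] x) := by
  induction k with
  | zero => simp
  | succ k ih => rw [prod_range_succ, iterate_succ_apply', hfg, ih, mul_assoc]

theorem star_iterate_eq_mul_prod (x k : ℕ) :
    _root_.star^[k] x = x * ∏ j ∈ range k, (_root_.star^[j] x + 1) :=
  Function.iterate_eq_mul_prod_range (fun _ => rfl) x k

theorem sylvester_product_formula_general (x k : ℕ) :
    star^[k] x + 1 = 1 + x * ∏ j ∈ Finset.range k, (star^[j] x + 1) := by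
  rw [star_iterate_eq_mul_prod, add_comm]

theorem sylvester_product_formula (x k : ℕ) (hx : 1 ≤ x) (hk : 1 ≤ k) :
    star^[k] x + 1 = 1 + x * ∏ j ∈ Finset.range k, (star^[j] x + 1) :=
  sylvester_product_formula_general x k
end

section
/- For every natural number x ≥ 1, the infinite series ∑_{k=0}^{∞} 1/(star^k(x) + 1) converges to 1/x, where star(x) = x(x+1). -/
/-!
Since `star y = y * (y + 1)`, the partial fraction `1 / (y + 1) = 1 / y - 1 / star y` makes the
series telescope: its partial sums are `1 / x - 1 / star^[n] x`, and `star^[n] x → ∞`.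
-/

open Filter Topology

theorem Antitone.hasSum_sub_succ {f : ℕ → ℝ} {l : ℝ} (hf : Antitone f)
    (hl : Tendsto f atTop (𝓝 l)) : HasSum (fun n => f n - f (n + 1)) (f 0 - l) := by
  rw [hasSum_iff_tendsto_nat_of_nonneg fun n => sub_nonneg.2 (hf n.le_succ)]
  simp_rw [Finset.sum_range_sub']
  exact tendsto_const_nhds.sub hl

theorem one_div_add_one_eq_sub {K : Type*} [Field K] {y : K} (hy : y ≠ 0) (hy' : y + 1 ≠ 0) :
    1 / (y + 1) = 1 / y - 1 / (y * (y + 1)) := by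
  field_simp
  ring

theorem hasSum_one_div_add_one_of_succ_eq_mul {s : ℕ → ℝ} (hpos : ∀ k, 0 < s k)
    (hs : ∀ k, s (k + 1) = s k * (s k + 1)) (hlim : Tendsto s atTop atTop) :
    HasSum (fun k => 1 / (s k + 1)) (1 / s 0) := by
  have hanti : Antitone fun k => 1 / s k := antitone_nat_of_succ_le fun k =>
    one_div_le_one_div_of_le (hpos k) (by nlinarith [hs k, hpos k])
  have hterm : ∀ k, 1 / (s k + 1) = 1 / s k - 1 / s (k + 1) := fun k => by
    rw [hs]
    exact one_div_add_one_eq_sub (hpos k).ne' (by linarith [hpos k])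
  have hlim' : Tendsto (fun k => 1 / s k) atTop (𝓝 0) := by
    simp_rw [one_div]
    exact hlim.inv_tendsto_atTop
  simpa [hterm] using hanti.hasSum_sub_succ hlim'

theorem add_le_star_iterate {x : ℕ} (hx : 1 ≤ x) (k : ℕ) : x + k ≤ star^[k] x := by
  induction k with
  | zero => rfl
  | succ k ih =>
    rw [Function.iterate_succ_apply', _root_.star]
    nlinarith

theorem reciprocal_series (x : ℕ) (hx : 1 ≤ x) :
    HasSum (fun k => 1 / ((star^[k] x : ℝ) + 1)) (1 / (x : ℝ)) := by
  refine hasSum_one_div_add_one_of_succ_eq_mul (fun k => ?_) (fun k => ?_) ?_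
  · have hle := add_le_star_iterate hx k
    exact_mod_cast (by omega : 0 < star^[k] x)
  · rw [Function.iterate_succ_apply', _root_.star]
    push_cast
    rfl
  · have htop : Tendsto (fun k => star^[k] x) atTop atTop :=
      tendsto_atTop_mono (fun k => (k.le_add_left x).trans (add_le_star_iterate hx k)) tendsto_id
    exact tendsto_natCast_atTop_atTop.comp htop
end

section
/- Every prime p that divides some term of Sylvester's sequence ⟨star^k(1) + 1⟩_{k≥0} satisfies p = 2, p = 3, or p ≡ 1 (mod 6). -/
lemma key_lemma (m p : ℕ) (hp : p.Prime) (hdvd : p ∣ (m ^ 2 + m + 1)) :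
    p = 3 ∨ p % 3 = 1 := by
  by_cases hp3 : p = 3
  · exact Or.inl hp3
  right
  haveI : Fact p.Prime := ⟨hp⟩
  set x : ZMod p := (m : ZMod p) with hx
  have h0 : x ^ 2 + x + 1 = 0 := by
    have := (ZMod.natCast_eq_zero_iff (m ^ 2 + m + 1) p).mpr hdvd
    push_cast at this
    exact this
  have hx3 : x ^ 3 = 1 := by
    have : x ^ 3 - 1 = (x - 1) * (x ^ 2 + x + 1) := by ring
    rw [h0, mul_zero] at this
    linear_combination this
  have hx1 : x ≠ 1 := by
    intro h
    rw [h] at h0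
    norm_num at h0
    have hd3 : p ∣ 3 :=
      (ZMod.natCast_eq_zero_iff 3 p).mp (by push_cast; linear_combination h0)
    exact hp3 ((Nat.prime_dvd_prime_iff_eq hp (by norm_num)).mp hd3)
  have hx0 : x ≠ 0 := by
    intro h
    rw [h] at h0
    norm_num at h0
  have hord : orderOf x = 3 := orderOf_eq_prime hx3 hx1
  have hdvd1 : orderOf x ∣ p - 1 :=
    orderOf_dvd_of_pow_eq_one (ZMod.pow_card_sub_one_eq_one hx0)
  rw [hord] at hdvd1
  have hp2 := hp.two_le
  omega

theorem sylvester_prime_factors_mod_six (p k : ℕ) (hp : p.Prime)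
    (hdvd : p ∣ (star^[k] 1 + 1)) : p = 2 ∨ p = 3 ∨ p % 6 = 1 := by
  cases k with
  | zero =>
    simp only [Function.iterate_zero, id_eq] at hdvd
    norm_num at hdvd
    left
    exact (Nat.prime_dvd_prime_iff_eq hp Nat.prime_two).mp hdvd
  | succ n =>
    rw [Function.iterate_succ_apply'] at hdvd
    set m := _root_.star^[n] 1 with hm
    have heq : _root_.star m + 1 = m ^ 2 + m + 1 := by
      show m * (m + 1) + 1 = _
      ring
    rw [heq] at hdvd
    have h3 := key_lemma m p hp hdvd
    have hodd : p ≠ 2 := by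
      intro h
      subst h
      have h2 : 2 ∣ m ^ 2 + m := by
        have hmm : m ^ 2 + m = m * (m + 1) := by ring
        rw [hmm]
        exact (Nat.even_mul_succ_self m).two_dvd
      omega
    have hpodd : p % 2 = 1 := Nat.Prime.eq_two_or_odd hp |>.resolve_left hodd
    rcases h3 with h | h
    · exact Or.inr (Or.inl h)
    · right; right; omega
end

section
/- No prime p divides two distinct terms star^j(x)+1 and star^k(x)+1 (j ≠ k) of the gross x-sequence, for any x ≥ 1. -/
lemma dvd_later (x p n : ℕ) (h : p ∣ (star^[n] x + 1)) :
    ∀ m, n < m → p ∣ star^[m] x := by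
  intro m hm
  induction m with
  | zero => omega
  | succ m ih =>
    rw [Function.iterate_succ_apply']
    unfold _root_.star
    rcases Nat.lt_succ_iff_lt_or_eq.mp hm with h' | h'
    · exact Dvd.dvd.mul_right (ih h') _
    · subst h'; exact Dvd.dvd.mul_left h _

theorem no_prime_recurs (x p j k : ℕ) (hx : 1 ≤ x) (hp : p.Prime) (hjk : j ≠ k)
    (hj : p ∣ (star^[j] x + 1)) : ¬ p ∣ (star^[k] x + 1) := by
  intro hk
  rcases hjk.lt_or_gt with h | h
  · have := dvd_later x p j hj k h
    have : p ∣ 1 := (Nat.dvd_add_right this).mp hk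
    exact hp.one_lt.ne' (Nat.dvd_one.mp this)
  · have := dvd_later x p k hk j h
    have : p ∣ 1 := (Nat.dvd_add_right this).mp hj
    exact hp.one_lt.ne' (Nat.dvd_one.mp this)
end
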